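/- arXiv:1509.01971 — 2 statements merged into one kernel-verified Lean document; each statement's English description precedes it below -/
import Mathlib

section
/- Let ρ be a 3-form on a 6-dimensional real vector space V, K_ρ: V → V ⊗ Λ⁶V* the endomorphism-valued map determined by ι_x ρ ∧ ρ = ι_{K_ρ(x)}(vol) (using the isomorphism θ⁻¹: V⊗Λ⁶V* → Λ⁵V*, θ⁻¹(x⊗α)=ι_x α), and λ(ρ) = (1/6)·trace(K_ρ²) ∈ (Λ⁶V*)⊗². Then λ is invariant under the action of SL(V) on Λ³V* (up to the natural action on (Λ⁶V*)⊗²): for g ∈ GL(V), λ(g*ρ) = (det g)² · g*λ(ρ) appropriately, in particular λ(g*ρ) and λ(ρ) have the same sign for all g ∈ GL(V). -/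
/- STATEMENT 3: For ρ a 3-form on a 6-dimensional real vector space V, define
K_ρ : V → V (relative to a fixed volume form) by ι_x ρ ∧ ρ = ι_{K_ρ x} vol and
λ(ρ) = (1/6)·trace(K_ρ²).  Then λ is a relative invariant: λ(g*ρ) = (det g)²·λ(ρ),
in particular λ(g*ρ) and λ(ρ) have the same sign for every g ∈ GL(V).

We model V = Fin 6 → ℝ; forms live in the exterior algebra of V* ≅ Fin 6 → ℝ, the
trivializing volume form being vol = f¹∧⋯∧f⁶, so that K_ρ is a matrix and λ(ρ) ∈ ℝ
(the coefficient with respect to vol⊗vol). -/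

noncomputable section

open ExteriorAlgebra Matrix

abbrev W : Type := Fin 6 → ℝ

/-- a vector of V, paired against covectors in W = V* -/
def dualize (x : Fin 6 → ℝ) : Module.Dual ℝ W :=
  ∑ i : Fin 6, x i • LinearMap.proj i

/-- contraction (interior product) of a form by the vector `x` -/
def ctr (x : Fin 6 → ℝ) : ExteriorAlgebra ℝ W →ₗ[ℝ] ExteriorAlgebra ℝ W :=
  CliffordAlgebra.contractLeft (dualize x)

def fvec (i : Fin 6) : ExteriorAlgebra ℝ W := ExteriorAlgebra.ι ℝ (Pi.single i 1)

/-- the fixed volume form f¹∧f²∧f³∧f⁴∧f⁵∧f⁶ -/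
def vol : ExteriorAlgebra ℝ W :=
  fvec 0 * fvec 1 * fvec 2 * fvec 3 * fvec 4 * fvec 5

/-- pullback of forms by `g ∈ GL(V)`: on covector coordinates it acts by `gᵀ` -/
def pull (g : GL (Fin 6) ℝ) : ExteriorAlgebra ℝ W →ₐ[ℝ] ExteriorAlgebra ℝ W :=
  ExteriorAlgebra.map (Matrix.toLin' ((g : Matrix (Fin 6) (Fin 6) ℝ)ᵀ))

-- Lemma 1: contraction commutes with map
lemma ctr_map (d : Module.Dual ℝ W) (A : W →ₗ[ℝ] W) (φ : ExteriorAlgebra ℝ W) :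
    CliffordAlgebra.contractLeft d (ExteriorAlgebra.map A φ)
      = ExteriorAlgebra.map A (CliffordAlgebra.contractLeft (d ∘ₗ A) φ) := by
  induction φ using CliffordAlgebra.left_induction with
  | algebraMap r => simp [AlgHom.commutes]
  | add x y hx hy => simp [map_add, hx, hy]
  | ι_mul x m hx =>
      rw [_root_.map_mul, ExteriorAlgebra.map_apply_ι, CliffordAlgebra.contractLeft_ι_mul,
        CliffordAlgebra.contractLeft_ι_mul, hx, map_sub, _root_.map_smul, _root_.map_mul,
        ExteriorAlgebra.map_apply_ι]
      rfl

lemma dualize_comp (x : Fin 6 → ℝ) (M : Matrix (Fin 6) (Fin 6) ℝ) :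
    dualize x ∘ₗ Matrix.toLin' Mᵀ = dualize (M.mulVec x) := by
  apply LinearMap.ext; intro w
  simp only [LinearMap.coe_comp, Function.comp_apply, Matrix.toLin'_apply, dualize,
    LinearMap.coe_sum, Finset.sum_apply, LinearMap.smul_apply, LinearMap.proj_apply,
    smul_eq_mul, Matrix.mulVec, dotProduct]
  simp only [Finset.mul_sum, Finset.sum_mul]
  rw [Finset.sum_comm]
  exact Finset.sum_congr rfl fun i _ => Finset.sum_congr rfl fun j _ => by
    simp [Matrix.transpose_apply]; ring

-- the standard basis
def e : Module.Basis (Fin 6) ℝ W := Pi.basisFun ℝ (Fin 6)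

-- any top-degree alternating map is det times its value on the basis
lemma alt_eq {N : Type*} [AddCommGroup N] [Module ℝ N] (f : W [⋀^Fin 6]→ₗ[ℝ] N)
    (v : Fin 6 → W) : f v = e.det v • f e := by
  have h : f = (e.det).smulRight (f e) := by
    refine Module.Basis.ext_alternating e fun i hi => ?_
    let σ : Equiv.Perm (Fin 6) := Equiv.ofBijective i (Finite.injective_iff_bijective.1 hi)
    have hσ : (fun j => e (i j)) = ⇑e ∘ σ := rfl
    rw [hσ, AlternatingMap.map_perm]
    simp [AlternatingMap.smulRight_apply, AlternatingMap.map_perm, Module.Basis.det_self]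
  conv_lhs => rw [h]
  simp [AlternatingMap.smulRight_apply]

lemma vol_eq : vol = ιMulti ℝ 6 (fun i => (Pi.single i 1 : W)) := by
  rw [ExteriorAlgebra.ιMulti_apply]
  simp only [List.ofFn_succ, List.ofFn_zero, List.prod_cons, List.prod_nil, mul_one]
  rw [show (Fin.succ 0 : Fin 6) = 1 from rfl, show ((Fin.succ 0).succ : Fin 6) = 2 from rfl,
    show ((Fin.succ 0).succ.succ : Fin 6) = 3 from rfl,
    show ((Fin.succ 0).succ.succ.succ : Fin 6) = 4 from rfl,
    show ((Fin.succ 0).succ.succ.succ.succ : Fin 6) = 5 from rfl]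
  simp [vol, fvec, mul_assoc]

lemma e_det (v : Fin 6 → W) : e.det v = (Matrix.of v).det := by
  rw [show e.det = Matrix.detRowAlternating from Pi.basisFun_det]
  exact congrArg _ rfl

lemma pull_vol (g : GL (Fin 6) ℝ) :
    pull g vol = (g : Matrix (Fin 6) (Fin 6) ℝ).det • vol := by
  rw [vol_eq, pull, ExteriorAlgebra.map_apply_ιMulti,
    alt_eq (ιMulti ℝ 6) _]
  congr 1
  · rw [e_det]
    congr 1
    ext i j
    simp [e, Matrix.toLin'_apply, Matrix.mulVec_single]
  · exact congrArg _ (funext fun i => by simp [e])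

-- ι_x of anything repeated: f_j ∧ vol = 0
lemma fvec_mul_vol (j : Fin 6) : fvec j * vol = 0 := by
  have h7 : fvec j * vol
      = ιMulti ℝ 7 (Fin.cons (Pi.single j 1) (fun i : Fin 6 => (Pi.single i 1 : W))) := by
    rw [ExteriorAlgebra.ιMulti_succ_apply, show vecTail (Fin.cons (Pi.single j 1) fun i : Fin 6 => (Pi.single i 1 : W)) = (fun i : Fin 6 => (Pi.single i 1 : W)) from funext fun i => by simp [Matrix.vecTail, Fin.cons_succ], Fin.cons_zero, ← vol_eq, fvec]
  rw [h7]
  refine AlternatingMap.map_eq_zero_of_eq _ _ (i := 0) (j := j.succ) ?_ (Fin.succ_ne_zero j).symm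
  simp [Fin.cons_succ]

lemma ctr_fvec_mul (y : Fin 6 → ℝ) (j : Fin 6) (φ : ExteriorAlgebra ℝ W) :
    ctr y (fvec j * φ) = y j • φ - fvec j * ctr y φ := by
  rw [ctr, fvec, CliffordAlgebra.contractLeft_ι_mul]
  congr 2
  simp [dualize, Pi.single_apply]

lemma vol_ne_zero : vol ≠ 0 := by
  intro h
  have hh := congrArg (ExteriorAlgebra.liftAlternating
    (Pi.single (M := fun i => W [⋀^Fin i]→ₗ[ℝ] ℝ) 6 e.det)) h
  rw [vol_eq, ExteriorAlgebra.liftAlternating_apply_ιMulti, map_zero] at hh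
  simp only [Pi.single_eq_same] at hh
  have hdet : e.det (fun i : Fin 6 => (Pi.single i 1 : W)) = 1 := by
    rw [e_det]
    have h1 : (Matrix.of fun i : Fin 6 => (Pi.single i 1 : W)) = 1 := by
      ext i j
      simp [Matrix.one_apply, Pi.single_apply, eq_comm]
    rw [h1, Matrix.det_one]
  rw [hdet] at hh
  exact one_ne_zero hh

lemma dualize_smul (c : ℝ) (x : Fin 6 → ℝ) : dualize (c • x) = c • dualize x := by
  simp [dualize, Finset.smul_sum, smul_smul]

lemma dualize_sub (x y : Fin 6 → ℝ) : dualize (x - y) = dualize x - dualize y := by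
  unfold dualize; rw [← Finset.sum_sub_distrib]
  exact Finset.sum_congr rfl fun i _ => by rw [Pi.sub_apply]; exact sub_smul (x i) (y i) (LinearMap.proj i : Module.Dual ℝ W)

lemma ctr_smul (c : ℝ) (x : Fin 6 → ℝ) (φ : ExteriorAlgebra ℝ W) :
    ctr (c • x) φ = c • ctr x φ := by
  rw [ctr, dualize_smul, LinearMap.map_smul, LinearMap.smul_apply]; rfl

lemma ctr_sub (x y : Fin 6 → ℝ) (φ : ExteriorAlgebra ℝ W) :
    ctr (x - y) φ = ctr x φ - ctr y φ := by
  rw [ctr, dualize_sub, map_sub]; rfl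

lemma ctr_vol_inj (y : Fin 6 → ℝ) (h : ctr y vol = 0) : y = 0 := by
  funext j
  have h1 : (0 : ExteriorAlgebra ℝ W) = y j • vol - fvec j * ctr y vol := by
    rw [← ctr_fvec_mul, fvec_mul_vol, map_zero]
  rw [h, mul_zero, sub_zero] at h1
  rcases smul_eq_zero.mp h1.symm with h2 | h2
  · exact h2
  · exact absurd h2 vol_ne_zero

theorem lambda_relative_invariant_GL
    (ρ : ExteriorAlgebra ℝ W)
    (hdeg : ρ ∈ (LinearMap.range (ExteriorAlgebra.ι ℝ (M := W)) ^ 3 :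
        Submodule ℝ (ExteriorAlgebra ℝ W)))
    (g : GL (Fin 6) ℝ)
    (K K' : Matrix (Fin 6) (Fin 6) ℝ)
    (hK : ∀ x : Fin 6 → ℝ, ctr x ρ * ρ = ctr (K.mulVec x) vol)
    (hK' : ∀ x : Fin 6 → ℝ, ctr x (pull g ρ) * pull g ρ = ctr (K'.mulVec x) vol) :
    (6:ℝ)⁻¹ * (K' * K').trace
        = ((g : Matrix (Fin 6) (Fin 6) ℝ).det) ^ 2 * ((6:ℝ)⁻¹ * (K * K).trace) ∧
    (0 < (6:ℝ)⁻¹ * (K' * K').trace ↔ 0 < (6:ℝ)⁻¹ * (K * K).trace) ∧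
    ((6:ℝ)⁻¹ * (K' * K').trace < 0 ↔ (6:ℝ)⁻¹ * (K * K).trace < 0) := by
  set M : Matrix (Fin 6) (Fin 6) ℝ := (g : Matrix (Fin 6) (Fin 6) ℝ) with hM
  set N : Matrix (Fin 6) (Fin 6) ℝ := ((g⁻¹ : GL (Fin 6) ℝ) : Matrix (Fin 6) (Fin 6) ℝ) with hN
  have hMN : M * N = 1 := by
    rw [hM, hN, ← Units.val_mul, mul_inv_cancel, Units.val_one]
  -- the commutation of contraction with pullback
  have hcomm : ∀ (x : Fin 6 → ℝ) (φ : ExteriorAlgebra ℝ W),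
      ctr x (pull g φ) = pull g (ctr (M.mulVec x) φ) := by
    intro x φ
    rw [ctr, pull, ctr_map, dualize_comp]
    rfl
  -- K' = det M • (N * K * M)
  have hKK : K' = M.det • (N * (K * M)) := by
    have key : ∀ x : Fin 6 → ℝ,
        K'.mulVec x = (M.det • (N * (K * M))).mulVec x := by
      intro x
      have h1 := hK' x
      rw [hcomm x ρ, ← _root_.map_mul, hK (M.mulVec x)] at h1
      set y : Fin 6 → ℝ := K.mulVec (M.mulVec x) with hy
      have hMNy : M.mulVec (N.mulVec y) = y := by
        rw [Matrix.mulVec_mulVec, hMN, Matrix.one_mulVec]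
      have h5 := hcomm (N.mulVec y) vol
      rw [hMNy] at h5
      have h2 : pull g (ctr y vol) = ctr (M.det • (N.mulVec y)) vol := by
        rw [← h5, pull_vol, LinearMap.map_smul, ← ctr_smul]
      rw [h2] at h1
      have h3 := ctr_vol_inj (M.det • (N.mulVec y) - K'.mulVec x)
        (by rw [ctr_sub, h1, sub_self])
      have h4 := sub_eq_zero.mp h3
      rw [← h4, hy, Matrix.smul_mulVec, Matrix.mulVec_mulVec, Matrix.mulVec_mulVec,
        Matrix.mul_assoc]
    ext i j
    have := congrFun (key (Pi.single j 1)) i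
    simpa using this
  have htr : (K' * K').trace = M.det ^ 2 * (K * K).trace := by
    rw [hKK]
    have hmm : (N * (K * M)) * (N * (K * M)) = N * ((K * K) * M) := by
      have : (N * (K * M)) * (N * (K * M)) = N * (K * ((M * N) * (K * M))) := by
        noncomm_ring
      rw [this, hMN]
      noncomm_ring
    rw [Matrix.smul_mul, Matrix.mul_smul, smul_smul, hmm, Matrix.trace_smul,
      Matrix.trace_mul_comm N ((K * K) * M), Matrix.mul_assoc (K * K) M N, hMN,
      Matrix.mul_one, smul_eq_mul, sq]
  have hdet : M.det ≠ 0 := by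
    have : IsUnit M := ⟨g, rfl⟩
    exact ((Matrix.isUnit_iff_isUnit_det M).mp this).ne_zero
  have hpos : (0:ℝ) < M.det ^ 2 := by positivity
  refine ⟨by rw [htr]; ring, ?_, ?_⟩
  · rw [htr]; constructor <;> intro h <;> nlinarith
  · rw [htr]; constructor <;> intro h <;> nlinarith

end
end

section
/- Let 𝔤 be the 7-dimensional nilpotent Lie algebra with basis {e₁,...,e₇} and Chevalley–Eilenberg differential de¹=de²=de³=de⁴=0, de⁵=e¹∧e², de⁶=e¹∧e⁵, de⁷=0. Then a 4-form φ = Σ_{i<j<k<l} φ_{ijkl} e^{ijkl} on 𝔤 is closed if and only if φ₂₃₄₆ = φ₂₃₆₇ = φ₂₄₆₇ = φ₃₄₅₆ = φ₃₄₅₇ = φ₃₄₆₇ = φ₃₅₆₇ = φ₄₅₆₇ = 0. -/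
/- STATEMENT 10: Let 𝔤 be the 7-dimensional nilpotent Lie algebra (0,0,0,0,12,15,0),
i.e. with Chevalley–Eilenberg differential de⁵ = e¹∧e², de⁶ = e¹∧e⁵ and deⁱ = 0
otherwise.  A 4-form φ = Σ_{i<j<k<l} φ_{ijkl} e^{ijkl} is closed iff
φ₂₃₄₆ = φ₂₃₆₇ = φ₂₄₆₇ = φ₃₄₅₆ = φ₃₄₅₇ = φ₃₄₆₇ = φ₃₅₆₇ = φ₄₅₆₇ = 0.

Forms are modelled in the exterior algebra of 𝔤* ≅ ℝ⁷ with basis covectors eᵢ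
(0-based indices below: e^{i+1} of the paper is `ev i`). -/

noncomputable section

open ExteriorAlgebra

abbrev W7 : Type := Fin 7 → ℝ

/-- the basis covectors e¹,…,e⁷ (0-based) -/
def ev (i : Fin 7) : ExteriorAlgebra ℝ W7 := ExteriorAlgebra.ι ℝ (Pi.single i 1)

/-- the differentials de¹,…,de⁷ of the Lie algebra (0,0,0,0,12,15,0) -/
def d1 : Fin 7 → ExteriorAlgebra ℝ W7 :=
  ![0, 0, 0, 0, ev 0 * ev 1, ev 0 * ev 4, 0]

/-- the 4-form with coefficients `c` -/
def phi4 (c : Fin 7 → Fin 7 → Fin 7 → Fin 7 → ℝ) : ExteriorAlgebra ℝ W7 :=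
  ∑ i : Fin 7, ∑ j : Fin 7, ∑ k : Fin 7, ∑ l : Fin 7,
    if i < j ∧ j < k ∧ k < l then c i j k l • (ev i * ev j * ev k * ev l) else 0

/-- the Chevalley–Eilenberg differential of the 4-form with coefficients `c`
(extension of d1 as an antiderivation) -/
def dPhi4 (c : Fin 7 → Fin 7 → Fin 7 → Fin 7 → ℝ) : ExteriorAlgebra ℝ W7 :=
  ∑ i : Fin 7, ∑ j : Fin 7, ∑ k : Fin 7, ∑ l : Fin 7,
    if i < j ∧ j < k ∧ k < l then
      c i j k l • (d1 i * ev j * ev k * ev l - ev i * d1 j * ev k * ev l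
        + ev i * ev j * d1 k * ev l - ev i * ev j * ev k * d1 l)
    else 0

set_option maxRecDepth 10000

lemma ev_sq (i : Fin 7) : ev i * ev i = 0 := by
  simp [ev, ι_sq_zero]

lemma ev_anticomm (i j : Fin 7) : ev i * ev j = -(ev j * ev i) := by
  have := ExteriorAlgebra.ι_add_mul_swap (R := ℝ) (M := W7) (Pi.single i 1) (Pi.single j 1)
  rw [eq_neg_iff_add_eq_zero]
  simpa [ev] using this

lemma ev_swap (i j : Fin 7) (_ : j < i) : ev i * ev j = -(ev j * ev i) := ev_anticomm i j

lemma ev_swap' (i j : Fin 7) (x : ExteriorAlgebra ℝ W7) (_ : j < i) :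
    ev i * (ev j * x) = -(ev j * (ev i * x)) := by
  rw [← mul_assoc, ev_anticomm i j, neg_mul, mul_assoc]

lemma ev_sq' (i : Fin 7) (x : ExteriorAlgebra ℝ W7) : ev i * (ev i * x) = 0 := by
  rw [← mul_assoc, ev_sq, zero_mul]

/-- right-associated basis blade -/
def B (a b c d e : Fin 7) : ExteriorAlgebra ℝ W7 := ev a * (ev b * (ev c * (ev d * ev e)))

lemma d1_0 : d1 0 = 0 := rfl
lemma d1_1 : d1 1 = 0 := rfl
lemma d1_2 : d1 2 = 0 := rfl
lemma d1_3 : d1 3 = 0 := rfl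
lemma d1_4 : d1 4 = ev 0 * ev 1 := rfl
lemma d1_5 : d1 5 = ev 0 * ev 4 := rfl
lemma d1_6 : d1 6 = 0 := rfl

set_option maxHeartbeats 4000000 in
lemma key (c : Fin 7 → Fin 7 → Fin 7 → Fin 7 → ℝ) : dPhi4 c =
    c 1 2 3 5 • B 0 1 2 3 4
    + c 2 3 4 5 • B 0 1 2 3 5
    + c 2 3 4 6 • B 0 1 2 3 6
    + c 1 2 5 6 • B 0 1 2 4 6
    + (- c 2 4 5 6) • B 0 1 2 5 6
    + c 1 3 5 6 • B 0 1 3 4 6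
    + (- c 3 4 5 6) • B 0 1 3 5 6
    + c 2 3 5 6 • B 0 2 3 4 6 := by
  rw [dPhi4]
  simp only [Fin.sum_univ_seven]
  simp (config := { decide := true }) only [if_true, if_false]
  simp only [d1_0, d1_1, d1_2, d1_3, d1_4, d1_5, d1_6, zero_mul, mul_zero, smul_zero,
    sub_zero, zero_sub, add_zero, zero_add, neg_zero, smul_sub, smul_add, smul_neg, B]
  simp (config := { decide := true }) only [mul_assoc, ev_swap, ev_swap', ev_sq, ev_sq',
    mul_neg, neg_mul, neg_neg, mul_zero, zero_mul, neg_zero, smul_neg, smul_zero,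
    zero_sub, sub_zero, zero_add, add_zero, sub_neg_eq_add, neg_smul]
  abel

def F (s : Fin 5 → Fin 7) : W7 [⋀^Fin 5]→ₗ[ℝ] ℝ :=
  (Matrix.detRowAlternating : (Fin 5 → ℝ) [⋀^Fin 5]→ₗ[ℝ] ℝ).compLinearMap
    (LinearMap.funLeft ℝ ℝ s)

def fam (s : Fin 5 → Fin 7) : ∀ n : ℕ, W7 [⋀^Fin n]→ₗ[ℝ] ℝ := fun n =>
  match n with
  | 5 => F s
  | _ => 0

def lam (s : Fin 5 → Fin 7) : ExteriorAlgebra ℝ W7 →ₗ[ℝ] ℝ :=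
  ExteriorAlgebra.liftAlternating (fam s)

lemma B_eq_iMulti (a b c d e : Fin 7) :
    B a b c d e = ιMulti ℝ 5 (fun p => Pi.single ((![a,b,c,d,e] : Fin 5 → Fin 7) p) (1:ℝ)) := by
  simp [B, ιMulti_succ_apply, ιMulti_zero_apply, Matrix.vecTail, Matrix.vecHead, ev,
    Function.comp, Fin.succ_zero_eq_one, Matrix.cons_val_zero, Matrix.cons_val_one,
    Matrix.head_cons, Matrix.cons_val_succ]

lemma lam_B (s : Fin 5 → Fin 7) (a b c d e : Fin 7) :
    lam s (B a b c d e) =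
      Matrix.det (Matrix.of fun p q =>
        (Pi.single ((![a,b,c,d,e] : Fin 5 → Fin 7) p) (1:ℝ) : W7) (s q)) := by
  rw [B_eq_iMulti, lam, liftAlternating_apply_ιMulti]
  show F s _ = _
  rw [F, AlternatingMap.compLinearMap_apply]
  exact congrArg Matrix.det rfl

lemma det_zero_of_missing (v s : Fin 5 → Fin 7) (p : Fin 5) (h : ∀ q, v p ≠ s q) :
    Matrix.det (Matrix.of fun p q => (Pi.single (v p) (1:ℝ) : W7) (s q)) = 0 :=
  Matrix.det_eq_zero_of_row_eq_zero p fun q => by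
    simp [Pi.single_apply, (h q).symm]

lemma det_one_self (s : Fin 5 → Fin 7) (hs : Function.Injective s) :
    Matrix.det (Matrix.of fun p q => (Pi.single (s p) (1:ℝ) : W7) (s q)) = 1 := by
  have h : (Matrix.of fun p q => (Pi.single (s p) (1:ℝ) : W7) (s q)) = 1 := by
    ext p q
    simp [Matrix.one_apply, Pi.single_apply, hs.eq_iff, eq_comm]
  rw [h, Matrix.det_one]

lemma lam_0_0 : lam ![0,1,2,3,4] (B 0 1 2 3 4) = 1 := by
  rw [lam_B]; exact det_one_self _ (by decide)
lemma lam_0_1 : lam ![0,1,2,3,4] (B 0 1 2 3 5) = 0 := by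
  rw [lam_B]; exact det_zero_of_missing _ _ 4 (by decide)
lemma lam_0_2 : lam ![0,1,2,3,4] (B 0 1 2 3 6) = 0 := by
  rw [lam_B]; exact det_zero_of_missing _ _ 4 (by decide)
lemma lam_0_3 : lam ![0,1,2,3,4] (B 0 1 2 4 6) = 0 := by
  rw [lam_B]; exact det_zero_of_missing _ _ 4 (by decide)
lemma lam_0_4 : lam ![0,1,2,3,4] (B 0 1 2 5 6) = 0 := by
  rw [lam_B]; exact det_zero_of_missing _ _ 3 (by decide)
lemma lam_0_5 : lam ![0,1,2,3,4] (B 0 1 3 4 6) = 0 := by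
  rw [lam_B]; exact det_zero_of_missing _ _ 4 (by decide)
lemma lam_0_6 : lam ![0,1,2,3,4] (B 0 1 3 5 6) = 0 := by
  rw [lam_B]; exact det_zero_of_missing _ _ 3 (by decide)
lemma lam_0_7 : lam ![0,1,2,3,4] (B 0 2 3 4 6) = 0 := by
  rw [lam_B]; exact det_zero_of_missing _ _ 4 (by decide)
lemma lam_1_0 : lam ![0,1,2,3,5] (B 0 1 2 3 4) = 0 := by
  rw [lam_B]; exact det_zero_of_missing _ _ 4 (by decide)
lemma lam_1_1 : lam ![0,1,2,3,5] (B 0 1 2 3 5) = 1 := by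
  rw [lam_B]; exact det_one_self _ (by decide)
lemma lam_1_2 : lam ![0,1,2,3,5] (B 0 1 2 3 6) = 0 := by
  rw [lam_B]; exact det_zero_of_missing _ _ 4 (by decide)
lemma lam_1_3 : lam ![0,1,2,3,5] (B 0 1 2 4 6) = 0 := by
  rw [lam_B]; exact det_zero_of_missing _ _ 3 (by decide)
lemma lam_1_4 : lam ![0,1,2,3,5] (B 0 1 2 5 6) = 0 := by
  rw [lam_B]; exact det_zero_of_missing _ _ 4 (by decide)
lemma lam_1_5 : lam ![0,1,2,3,5] (B 0 1 3 4 6) = 0 := by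
  rw [lam_B]; exact det_zero_of_missing _ _ 3 (by decide)
lemma lam_1_6 : lam ![0,1,2,3,5] (B 0 1 3 5 6) = 0 := by
  rw [lam_B]; exact det_zero_of_missing _ _ 4 (by decide)
lemma lam_1_7 : lam ![0,1,2,3,5] (B 0 2 3 4 6) = 0 := by
  rw [lam_B]; exact det_zero_of_missing _ _ 3 (by decide)
lemma lam_2_0 : lam ![0,1,2,3,6] (B 0 1 2 3 4) = 0 := by
  rw [lam_B]; exact det_zero_of_missing _ _ 4 (by decide)
lemma lam_2_1 : lam ![0,1,2,3,6] (B 0 1 2 3 5) = 0 := by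
  rw [lam_B]; exact det_zero_of_missing _ _ 4 (by decide)
lemma lam_2_2 : lam ![0,1,2,3,6] (B 0 1 2 3 6) = 1 := by
  rw [lam_B]; exact det_one_self _ (by decide)
lemma lam_2_3 : lam ![0,1,2,3,6] (B 0 1 2 4 6) = 0 := by
  rw [lam_B]; exact det_zero_of_missing _ _ 3 (by decide)
lemma lam_2_4 : lam ![0,1,2,3,6] (B 0 1 2 5 6) = 0 := by
  rw [lam_B]; exact det_zero_of_missing _ _ 3 (by decide)
lemma lam_2_5 : lam ![0,1,2,3,6] (B 0 1 3 4 6) = 0 := by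
  rw [lam_B]; exact det_zero_of_missing _ _ 3 (by decide)
lemma lam_2_6 : lam ![0,1,2,3,6] (B 0 1 3 5 6) = 0 := by
  rw [lam_B]; exact det_zero_of_missing _ _ 3 (by decide)
lemma lam_2_7 : lam ![0,1,2,3,6] (B 0 2 3 4 6) = 0 := by
  rw [lam_B]; exact det_zero_of_missing _ _ 3 (by decide)
lemma lam_3_0 : lam ![0,1,2,4,6] (B 0 1 2 3 4) = 0 := by
  rw [lam_B]; exact det_zero_of_missing _ _ 3 (by decide)
lemma lam_3_1 : lam ![0,1,2,4,6] (B 0 1 2 3 5) = 0 := by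
  rw [lam_B]; exact det_zero_of_missing _ _ 3 (by decide)
lemma lam_3_2 : lam ![0,1,2,4,6] (B 0 1 2 3 6) = 0 := by
  rw [lam_B]; exact det_zero_of_missing _ _ 3 (by decide)
lemma lam_3_3 : lam ![0,1,2,4,6] (B 0 1 2 4 6) = 1 := by
  rw [lam_B]; exact det_one_self _ (by decide)
lemma lam_3_4 : lam ![0,1,2,4,6] (B 0 1 2 5 6) = 0 := by
  rw [lam_B]; exact det_zero_of_missing _ _ 3 (by decide)
lemma lam_3_5 : lam ![0,1,2,4,6] (B 0 1 3 4 6) = 0 := by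
  rw [lam_B]; exact det_zero_of_missing _ _ 2 (by decide)
lemma lam_3_6 : lam ![0,1,2,4,6] (B 0 1 3 5 6) = 0 := by
  rw [lam_B]; exact det_zero_of_missing _ _ 2 (by decide)
lemma lam_3_7 : lam ![0,1,2,4,6] (B 0 2 3 4 6) = 0 := by
  rw [lam_B]; exact det_zero_of_missing _ _ 2 (by decide)
lemma lam_4_0 : lam ![0,1,2,5,6] (B 0 1 2 3 4) = 0 := by
  rw [lam_B]; exact det_zero_of_missing _ _ 3 (by decide)
lemma lam_4_1 : lam ![0,1,2,5,6] (B 0 1 2 3 5) = 0 := by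
  rw [lam_B]; exact det_zero_of_missing _ _ 3 (by decide)
lemma lam_4_2 : lam ![0,1,2,5,6] (B 0 1 2 3 6) = 0 := by
  rw [lam_B]; exact det_zero_of_missing _ _ 3 (by decide)
lemma lam_4_3 : lam ![0,1,2,5,6] (B 0 1 2 4 6) = 0 := by
  rw [lam_B]; exact det_zero_of_missing _ _ 3 (by decide)
lemma lam_4_4 : lam ![0,1,2,5,6] (B 0 1 2 5 6) = 1 := by
  rw [lam_B]; exact det_one_self _ (by decide)
lemma lam_4_5 : lam ![0,1,2,5,6] (B 0 1 3 4 6) = 0 := by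
  rw [lam_B]; exact det_zero_of_missing _ _ 2 (by decide)
lemma lam_4_6 : lam ![0,1,2,5,6] (B 0 1 3 5 6) = 0 := by
  rw [lam_B]; exact det_zero_of_missing _ _ 2 (by decide)
lemma lam_4_7 : lam ![0,1,2,5,6] (B 0 2 3 4 6) = 0 := by
  rw [lam_B]; exact det_zero_of_missing _ _ 2 (by decide)
lemma lam_5_0 : lam ![0,1,3,4,6] (B 0 1 2 3 4) = 0 := by
  rw [lam_B]; exact det_zero_of_missing _ _ 2 (by decide)
lemma lam_5_1 : lam ![0,1,3,4,6] (B 0 1 2 3 5) = 0 := by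
  rw [lam_B]; exact det_zero_of_missing _ _ 2 (by decide)
lemma lam_5_2 : lam ![0,1,3,4,6] (B 0 1 2 3 6) = 0 := by
  rw [lam_B]; exact det_zero_of_missing _ _ 2 (by decide)
lemma lam_5_3 : lam ![0,1,3,4,6] (B 0 1 2 4 6) = 0 := by
  rw [lam_B]; exact det_zero_of_missing _ _ 2 (by decide)
lemma lam_5_4 : lam ![0,1,3,4,6] (B 0 1 2 5 6) = 0 := by
  rw [lam_B]; exact det_zero_of_missing _ _ 2 (by decide)
lemma lam_5_5 : lam ![0,1,3,4,6] (B 0 1 3 4 6) = 1 := by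
  rw [lam_B]; exact det_one_self _ (by decide)
lemma lam_5_6 : lam ![0,1,3,4,6] (B 0 1 3 5 6) = 0 := by
  rw [lam_B]; exact det_zero_of_missing _ _ 3 (by decide)
lemma lam_5_7 : lam ![0,1,3,4,6] (B 0 2 3 4 6) = 0 := by
  rw [lam_B]; exact det_zero_of_missing _ _ 1 (by decide)
lemma lam_6_0 : lam ![0,1,3,5,6] (B 0 1 2 3 4) = 0 := by
  rw [lam_B]; exact det_zero_of_missing _ _ 2 (by decide)
lemma lam_6_1 : lam ![0,1,3,5,6] (B 0 1 2 3 5) = 0 := by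
  rw [lam_B]; exact det_zero_of_missing _ _ 2 (by decide)
lemma lam_6_2 : lam ![0,1,3,5,6] (B 0 1 2 3 6) = 0 := by
  rw [lam_B]; exact det_zero_of_missing _ _ 2 (by decide)
lemma lam_6_3 : lam ![0,1,3,5,6] (B 0 1 2 4 6) = 0 := by
  rw [lam_B]; exact det_zero_of_missing _ _ 2 (by decide)
lemma lam_6_4 : lam ![0,1,3,5,6] (B 0 1 2 5 6) = 0 := by
  rw [lam_B]; exact det_zero_of_missing _ _ 2 (by decide)
lemma lam_6_5 : lam ![0,1,3,5,6] (B 0 1 3 4 6) = 0 := by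
  rw [lam_B]; exact det_zero_of_missing _ _ 3 (by decide)
lemma lam_6_6 : lam ![0,1,3,5,6] (B 0 1 3 5 6) = 1 := by
  rw [lam_B]; exact det_one_self _ (by decide)
lemma lam_6_7 : lam ![0,1,3,5,6] (B 0 2 3 4 6) = 0 := by
  rw [lam_B]; exact det_zero_of_missing _ _ 1 (by decide)
lemma lam_7_0 : lam ![0,2,3,4,6] (B 0 1 2 3 4) = 0 := by
  rw [lam_B]; exact det_zero_of_missing _ _ 1 (by decide)
lemma lam_7_1 : lam ![0,2,3,4,6] (B 0 1 2 3 5) = 0 := by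
  rw [lam_B]; exact det_zero_of_missing _ _ 1 (by decide)
lemma lam_7_2 : lam ![0,2,3,4,6] (B 0 1 2 3 6) = 0 := by
  rw [lam_B]; exact det_zero_of_missing _ _ 1 (by decide)
lemma lam_7_3 : lam ![0,2,3,4,6] (B 0 1 2 4 6) = 0 := by
  rw [lam_B]; exact det_zero_of_missing _ _ 1 (by decide)
lemma lam_7_4 : lam ![0,2,3,4,6] (B 0 1 2 5 6) = 0 := by
  rw [lam_B]; exact det_zero_of_missing _ _ 1 (by decide)
lemma lam_7_5 : lam ![0,2,3,4,6] (B 0 1 3 4 6) = 0 := by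
  rw [lam_B]; exact det_zero_of_missing _ _ 1 (by decide)
lemma lam_7_6 : lam ![0,2,3,4,6] (B 0 1 3 5 6) = 0 := by
  rw [lam_B]; exact det_zero_of_missing _ _ 1 (by decide)
lemma lam_7_7 : lam ![0,2,3,4,6] (B 0 2 3 4 6) = 1 := by
  rw [lam_B]; exact det_one_self _ (by decide)

theorem closed_four_forms_of_g :
    ∀ c : Fin 7 → Fin 7 → Fin 7 → Fin 7 → ℝ,
      dPhi4 c = 0 ↔
        (c 1 2 3 5 = 0 ∧ c 1 2 5 6 = 0 ∧ c 1 3 5 6 = 0 ∧ c 2 3 4 5 = 0 ∧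
         c 2 3 4 6 = 0 ∧ c 2 3 5 6 = 0 ∧ c 2 4 5 6 = 0 ∧ c 3 4 5 6 = 0) := by
  intro c
  constructor
  · intro h
    have hk := (key c).symm.trans h
    have h0 : c 1 2 3 5 = 0 := by
      have := congrArg (lam ![0,1,2,3,4]) hk
      simpa [lam_0_0, lam_0_1, lam_0_2, lam_0_3, lam_0_4, lam_0_5, lam_0_6, lam_0_7, smul_eq_mul] using this
    have h1 : c 2 3 4 5 = 0 := by
      have := congrArg (lam ![0,1,2,3,5]) hk
      simpa [lam_1_0, lam_1_1, lam_1_2, lam_1_3, lam_1_4, lam_1_5, lam_1_6, lam_1_7, smul_eq_mul] using this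
    have h2 : c 2 3 4 6 = 0 := by
      have := congrArg (lam ![0,1,2,3,6]) hk
      simpa [lam_2_0, lam_2_1, lam_2_2, lam_2_3, lam_2_4, lam_2_5, lam_2_6, lam_2_7, smul_eq_mul] using this
    have h3 : c 1 2 5 6 = 0 := by
      have := congrArg (lam ![0,1,2,4,6]) hk
      simpa [lam_3_0, lam_3_1, lam_3_2, lam_3_3, lam_3_4, lam_3_5, lam_3_6, lam_3_7, smul_eq_mul] using this
    have h4 : c 2 4 5 6 = 0 := by
      have := congrArg (lam ![0,1,2,5,6]) hk
      simpa [lam_4_0, lam_4_1, lam_4_2, lam_4_3, lam_4_4, lam_4_5, lam_4_6, lam_4_7, smul_eq_mul] using this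
    have h5 : c 1 3 5 6 = 0 := by
      have := congrArg (lam ![0,1,3,4,6]) hk
      simpa [lam_5_0, lam_5_1, lam_5_2, lam_5_3, lam_5_4, lam_5_5, lam_5_6, lam_5_7, smul_eq_mul] using this
    have h6 : c 3 4 5 6 = 0 := by
      have := congrArg (lam ![0,1,3,5,6]) hk
      simpa [lam_6_0, lam_6_1, lam_6_2, lam_6_3, lam_6_4, lam_6_5, lam_6_6, lam_6_7, smul_eq_mul] using this
    have h7 : c 2 3 5 6 = 0 := by
      have := congrArg (lam ![0,2,3,4,6]) hk
      simpa [lam_7_0, lam_7_1, lam_7_2, lam_7_3, lam_7_4, lam_7_5, lam_7_6, lam_7_7, smul_eq_mul] using this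
    exact ⟨h0, h3, h5, h1, h2, h7, h4, h6⟩
  · rintro ⟨h1, h2, h3, h4, h5, h6, h7, h8⟩
    rw [key, h1, h2, h3, h4, h5, h6, h7, h8]
    simp

end
end
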